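/- Let H be a d-dimensional affine space and σ a simplex with dim(σ) ≤ d contained in the t-tubular neighborhood of H for some t ≥ 0. Then sin ∠(Aff σ, H) ≤ 2·t·dim(σ)/height(σ). -/

import Mathlib

open Metric Set
open scoped Classical

noncomputable section

abbrev Euc (N : ℕ) := EuclideanSpace ℝ (Fin N)

variable {N : ℕ}

/-- The medial axis of `A`: points with at least two closest points in `A`. -/
def medialAxis (A : Set (Euc N)) : Set (Euc N) :=
  {x | ∃ a ∈ A, ∃ b ∈ A, a ≠ b ∧ dist x a = infDist x A ∧ dist x b = infDist x A}

/-- `p` is a nearest point of `A` to `x`. -/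
def IsNearestPt (A : Set (Euc N)) (x p : Euc N) : Prop :=
  p ∈ A ∧ dist x p = infDist x A

/-- `π` is a nearest-point projection map onto `A`, defined off the medial axis. -/
def IsNearestPtProj (A : Set (Euc N)) (π : Euc N → Euc N) : Prop :=
  ∀ x, x ∉ medialAxis A → IsNearestPt A x (π x)

/-- The angle between two linear subspaces: sup over unit vectors of `V₀` of the inf of
angles with unit vectors of `V₁`. -/
def subAngle (V₀ V₁ : Submodule ℝ (Euc N)) : ℝ :=
  sSup {a | ∃ v₀ ∈ V₀, ‖v₀‖ = 1 ∧
    a = sInf {b | ∃ v₁ ∈ V₁, ‖v₁‖ = 1 ∧ b = InnerProductGeometry.angle v₀ v₁}}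

/-- Angle between two affine subspaces. -/
def affAngle (H₀ H₁ : AffineSubspace ℝ (Euc N)) : ℝ :=
  subAngle H₀.direction H₁.direction

/-- Angle between the line through `u, v` and the affine subspace `H`. -/
def lineAngle (u v : Euc N) (H : AffineSubspace ℝ (Euc N)) : ℝ :=
  subAngle (Submodule.span ℝ {v - u}) H.direction

/-- Orthogonal projection onto an affine subspace (the identity if `H` is empty). -/
def projA (H : AffineSubspace ℝ (Euc N)) (x : Euc N) : Euc N :=
  if h : (H : Set (Euc N)).Nonempty then
    h.choose + (H.direction.orthogonalProjectionOnto (x - h.choose) : Euc N)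
  else x

/-- The minimal height of a simplex (over all vertices, distance to opposite facet). -/
def height (σ : Finset (Euc N)) : ℝ :=
  sInf ((fun v => infDist v (affineSpan ℝ ((σ.erase v : Finset (Euc N)) : Set (Euc N)))) '' σ)

/-- `σ` is a non-degenerate simplex: its vertices are affinely independent. -/
def Nondegenerate (σ : Finset (Euc N)) : Prop :=
  AffineIndependent ℝ (fun p : σ => (p : Euc N))

/-- The sphere centered at `z` of radius `r` circumscribes `σ`. -/
def IsCircum (σ : Finset (Euc N)) (z : Euc N) (r : ℝ) : Prop :=
  ∀ p ∈ σ, dist p z = r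

/-- `(z, r)` is the smallest circumscribing sphere of `σ`. -/
def IsMinCircum (σ : Finset (Euc N)) (z : Euc N) (r : ℝ) : Prop :=
  IsCircum σ z r ∧ ∀ z' r', IsCircum σ z' r' → r ≤ r'

/-- `(c, r)` is the smallest enclosing ball of `σ`. -/
def IsSEB (σ : Finset (Euc N)) (c : Euc N) (r : ℝ) : Prop :=
  (∀ p ∈ σ, dist p c ≤ r) ∧ ∀ c' r', (∀ p ∈ σ, dist p c' ≤ r') → r ≤ r'

/-- `σ` is a Delaunay simplex of the point set `Q`: some circumscribing sphere of `σ`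
bounds a ball containing no point of `Q` in its interior. -/
def IsDelaunay (Q : Set (Euc N)) (σ : Finset (Euc N)) : Prop :=
  (σ : Set (Euc N)) ⊆ Q ∧ ∃ z r, IsCircum σ z r ∧ ∀ q ∈ Q, r ≤ dist q z

/-- Separation of a point set: infimum of pairwise distances. -/
def sep (X : Set (Euc N)) : ℝ :=
  sInf {r | ∃ x ∈ X, ∃ y ∈ X, x ≠ y ∧ r = dist x y}

/-- A relation is a multiplicative `M`-distortion. -/
def MulDistortion (R : Set (Euc N × Euc N)) (M : ℝ) : Prop :=
  ∀ p ∈ R, ∀ q ∈ R,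
    (1 / (1 + M)) * dist p.1 q.1 ≤ dist p.2 q.2 ∧ dist p.2 q.2 ≤ (1 + M) * dist p.1 q.1

/-- A relation is an additive `A`-distortion. -/
def AddDistortion (R : Set (Euc N × Euc N)) (A : ℝ) : Prop :=
  ∀ p ∈ R, ∀ q ∈ R, |dist p.2 q.2 - dist p.1 q.1| ≤ A

/-- A relation is one-to-one: injective and functional. -/
def OneToOneRel (R : Set (Euc N × Euc N)) : Prop :=
  (∀ p ∈ R, ∀ q ∈ R, p.2 = q.2 → p.1 = q.1) ∧ (∀ p ∈ R, ∀ q ∈ R, p.1 = q.1 → p.2 = q.2)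

/-- `M` is a `C²` `d`-dimensional submanifold of `ℝᴺ` with tangent spaces given by `T`. -/
def IsC2Submanifold (d : ℕ) (M : Set (Euc N)) (T : Euc N → Submodule ℝ (Euc N)) : Prop :=
  ∀ m ∈ M, ∃ (φ : EuclideanSpace ℝ (Fin d) → Euc N) (U : Set (Euc N)),
    IsOpen U ∧ m ∈ U ∧ ContDiff ℝ 2 φ ∧ Function.Injective φ ∧
    (∀ x, Function.Injective (fderiv ℝ φ x)) ∧
    Set.range φ = M ∩ U ∧
    ∀ x, T (φ x) = LinearMap.range ((fderiv ℝ φ x).toLinearMap)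

/-- The family of affine spaces associated to a simplex `σ`: the affine hull of `σ`
together with the tangent spaces at projections of points of `Conv σ` onto `M`. -/
def stdFamily (σ : Finset (Euc N)) (T : Euc N → Submodule ℝ (Euc N)) (πM : Euc N → Euc N) :
    Set (AffineSubspace ℝ (Euc N)) :=
  insert (affineSpan ℝ (σ : Set (Euc N)))
    ((fun x => AffineSubspace.mk' (πM x) (T (πM x))) '' convexHull ℝ (σ : Set (Euc N)))

end

/-!
Write a vector `u` of `Aff σ` as `∑ c q • (q - p₀)` over the vertices `q ≠ p₀`. Its component
normal to the facet opposite `q` is `c q` times the altitude from `q`, so `|c q| ≤ ‖u‖ / height σ`.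
Each edge `q - p₀` joins two points within `t` of `H`, so its component normal to `H` has length
at most `2t`. Hence the component of `u` normal to `H` is at most `2t (#σ - 1) / height σ · ‖u‖`,
and for a unit vector `u` this normal component is the sine of the smallest angle between `u`
and `H`.
-/

open InnerProductGeometry Real
open scoped InnerProductSpace

lemma exists_eq_sum_smul_sub_of_mem_direction {k V : Type*} [Ring k] [AddCommGroup V] [Module k V]
    [DecidableEq V] {s : Finset V} {p₀ u : V} (hp₀ : p₀ ∈ s)
    (hu : u ∈ (affineSpan k (s : Set V)).direction) :
    ∃ c : V → k, u = ∑ q ∈ s.erase p₀, c q • (q - p₀) := by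
  rw [direction_affineSpan, vectorSpan_eq_span_vsub_finset_right_ne k hp₀, Finset.coe_image,
    Submodule.mem_span_image_finset_iff_exists_fun'] at hu
  obtain ⟨c, hc⟩ := hu
  exact ⟨c, hc.symm⟩

section InnerProductSpace

variable {E : Type*} [NormedAddCommGroup E] [InnerProductSpace ℝ E]

lemma infDist_le_norm_starProjection_orthogonal {A : AffineSubspace ℝ E}
    [A.direction.HasOrthogonalProjection] {p₀ : E} (hp₀ : p₀ ∈ A) (q : E) :
    infDist q A ≤ ‖A.directionᗮ.starProjection (q - p₀)‖ := by
  have hfoot : A.direction.starProjection (q - p₀) + p₀ ∈ A :=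
    AffineSubspace.vadd_mem_of_mem_direction (A.direction.starProjection_apply_mem _) hp₀
  calc infDist q A ≤ dist q (A.direction.starProjection (q - p₀) + p₀) :=
        infDist_le_dist_of_mem hfoot
    _ = ‖A.directionᗮ.starProjection (q - p₀)‖ := by
        rw [dist_eq_norm, Submodule.starProjection_orthogonal_val]
        congr 1
        abel

lemma abs_mul_infDist_le_norm {A : AffineSubspace ℝ E} [A.direction.HasOrthogonalProjection]
    {p₀ q u : E} {c : ℝ} (hp₀ : p₀ ∈ A) (hu : u - c • (q - p₀) ∈ A.direction) :
    |c| * infDist q A ≤ ‖u‖ := by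
  set P := A.directionᗮ.starProjection
  have hPu : P u = c • P (q - p₀) := by
    rw [← sub_eq_zero, ← map_smul, ← map_sub]
    exact Submodule.starProjection_orthogonal_apply_eq_zero hu
  calc |c| * infDist q A ≤ |c| * ‖P (q - p₀)‖ := by
        gcongr
        exact infDist_le_norm_starProjection_orthogonal hp₀ q
    _ = ‖P u‖ := by rw [hPu, norm_smul, Real.norm_eq_abs]
    _ ≤ ‖u‖ := Submodule.norm_starProjection_apply_le _ u

lemma norm_starProjection_orthogonal_sub_le [FiniteDimensional ℝ E] (H : AffineSubspace ℝ E)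
    {t : ℝ} (ht : 0 ≤ t) {p p' : E} (hp : p ∈ cthickening t (H : Set E))
    (hp' : p' ∈ cthickening t (H : Set E)) :
    ‖H.directionᗮ.starProjection (p - p')‖ ≤ 2 * t := by
  rw [cthickening_eq_biUnion_closedBall _ ht, H.closed_of_finiteDimensional.closure_eq] at hp hp'
  obtain ⟨y, hy, hpy⟩ := mem_iUnion₂.mp hp
  obtain ⟨y', hy', hpy'⟩ := mem_iUnion₂.mp hp'
  set P := H.directionᗮ.starProjection
  have hPy : P (y - y') = 0 :=
    Submodule.starProjection_orthogonal_apply_eq_zero (H.vsub_mem_direction hy hy')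
  calc ‖P (p - p')‖ = ‖P ((p - y) - (p' - y'))‖ := by
        rw [show p - p' = (p - y) - (p' - y') + (y - y') by abel, map_add, hPy, add_zero]
    _ ≤ ‖(p - y) - (p' - y')‖ := Submodule.norm_starProjection_apply_le _ _
    _ ≤ ‖p - y‖ + ‖p' - y'‖ := norm_sub_le _ _
    _ ≤ t + t := add_le_add (mem_closedBall_iff_norm.mp hpy) (mem_closedBall_iff_norm.mp hpy')
    _ = 2 * t := by ring

lemma exists_unit_inner_eq_norm_starProjection {K : Submodule ℝ E} [K.HasOrthogonalProjection]
    (hK : K ≠ ⊥) (v : E) : ∃ w ∈ K, ‖w‖ = 1 ∧ ⟪v, w⟫_ℝ = ‖K.starProjection v‖ := by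
  by_cases hPv : K.starProjection v = 0
  · obtain ⟨w, hwK, hw0⟩ := K.ne_bot_iff.mp hK
    refine ⟨‖w‖⁻¹ • w, K.smul_mem _ hwK, norm_smul_inv_norm hw0, ?_⟩
    rw [hPv, norm_zero]
    exact K.inner_left_of_mem_orthogonal (K.smul_mem _ hwK)
      (K.starProjection_apply_eq_zero_iff.mp hPv)
  · refine ⟨‖K.starProjection v‖⁻¹ • K.starProjection v,
      K.smul_mem _ (K.starProjection_apply_mem v), norm_smul_inv_norm hPv, ?_⟩
    have hidem : ⟪v, K.starProjection v⟫_ℝ = ‖K.starProjection v‖ ^ 2 := by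
      rw [← real_inner_self_eq_norm_sq, K.inner_starProjection_left_eq_right,
        Submodule.starProjection_eq_self_iff.mpr (K.starProjection_apply_mem v)]
    rw [real_inner_smul_right, hidem]
    field_simp [norm_ne_zero_iff.mpr hPv]

lemma sInf_angle_le_arcsin (K : Submodule ℝ E) [K.HasOrthogonalProjection] {v : E}
    (hv : ‖v‖ = 1) :
    sInf {b | ∃ w ∈ K, ‖w‖ = 1 ∧ b = angle v w} ≤ arcsin ‖Kᗮ.starProjection v‖ := by
  rcases eq_or_ne K ⊥ with rfl | hK
  · have hempty : {b | ∃ w ∈ (⊥ : Submodule ℝ E), ‖w‖ = 1 ∧ b = angle v w} = ∅ := by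
      ext b
      simp
    rw [hempty, Real.sInf_empty]
    exact arcsin_nonneg.mpr (norm_nonneg _)
  obtain ⟨w, hwK, hw1, hvw⟩ := exists_unit_inner_eq_norm_starProjection hK v
  have hpyth := K.norm_sq_eq_add_norm_sq_starProjection v
  calc sInf {b | ∃ w ∈ K, ‖w‖ = 1 ∧ b = angle v w}
      ≤ angle v w := csInf_le ⟨0, by rintro _ ⟨w, -, -, rfl⟩; exact angle_nonneg _ _⟩
        ⟨w, hwK, hw1, rfl⟩
    _ = arccos ‖K.starProjection v‖ := by rw [angle, hvw, hv, hw1, one_mul, div_one]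
    _ = arcsin ‖Kᗮ.starProjection v‖ := by
        rw [hv, one_pow] at hpyth
        rw [arccos_eq_arcsin (norm_nonneg _),
          show 1 - ‖K.starProjection v‖ ^ 2 = ‖Kᗮ.starProjection v‖ ^ 2 by linarith,
          sqrt_sq (norm_nonneg _)]

end InnerProductSpace

variable {N : ℕ}

lemma subAngle_nonneg (V₀ V₁ : Submodule ℝ (Euc N)) : 0 ≤ subAngle V₀ V₁ :=
  Real.sSup_nonneg <| by
    rintro _ ⟨v, -, -, rfl⟩
    exact Real.sInf_nonneg <| by
      rintro _ ⟨w, -, -, rfl⟩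
      exact angle_nonneg _ _

lemma sin_subAngle_le {V₀ V₁ : Submodule ℝ (Euc N)} {B : ℝ} (hB : 0 ≤ B)
    (h : ∀ v ∈ V₀, ‖V₁ᗮ.starProjection v‖ ≤ B * ‖v‖) : sin (subAngle V₀ V₁) ≤ B := by
  have hθ : subAngle V₀ V₁ ≤ arcsin (min B 1) := by
    refine Real.sSup_le ?_ (arcsin_nonneg.mpr (le_min hB zero_le_one))
    rintro _ ⟨v, hv, hv1, rfl⟩
    refine (sInf_angle_le_arcsin V₁ hv1).trans (monotone_arcsin (le_min ?_ ?_))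
    · simpa [hv1] using h v hv
    · simpa [hv1] using V₁ᗮ.norm_starProjection_apply_le v
  calc sin (subAngle V₀ V₁) ≤ sin (arcsin (min B 1)) :=
        sin_le_sin_of_le_of_le_pi_div_two (by linarith [subAngle_nonneg V₀ V₁, pi_pos])
          (arcsin_le_pi_div_two _) hθ
    _ = min B 1 := sin_arcsin (by linarith [le_min hB zero_le_one]) (min_le_right _ _)
    _ ≤ B := min_le_left _ _

lemma height_nonneg (σ : Finset (Euc N)) : 0 ≤ height σ :=
  Real.sInf_nonneg <| by
    rintro _ ⟨v, -, rfl⟩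
    exact infDist_nonneg

lemma height_le_infDist (σ : Finset (Euc N)) {q : Euc N} (hq : q ∈ σ) :
    height σ ≤ infDist q (affineSpan ℝ ((σ.erase q : Finset (Euc N)) : Set (Euc N))) :=
  csInf_le ⟨0, by rintro _ ⟨v, -, rfl⟩; exact infDist_nonneg⟩ ⟨q, hq, rfl⟩

lemma Nondegenerate.notMem_affineSpan_erase {σ : Finset (Euc N)} (hσ : Nondegenerate σ)
    {v : Euc N} (hv : v ∈ σ) :
    v ∉ affineSpan ℝ ((σ.erase v : Finset (Euc N)) : Set (Euc N)) := by
  have h := hσ.notMem_affineSpan_sdiff ⟨v, hv⟩ Set.univ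
  convert h using 3
  ext x
  simp [and_comm, Subtype.ext_iff]

lemma height_pos {σ : Finset (Euc N)} (hσ : Nondegenerate σ) (hcard : 1 < σ.card) :
    0 < height σ := by
  set f := fun v => infDist v (affineSpan ℝ ((σ.erase v : Finset (Euc N)) : Set (Euc N)))
  obtain ⟨v, hv, hmin⟩ := ((σ : Set (Euc N)).image_nonempty (f := f) |>.mpr
    (Finset.card_pos.mp (by omega))).csInf_mem (σ.finite_toSet.image f)
  rw [height, ← hmin]
  obtain ⟨w, hw⟩ : (σ.erase v).Nonempty := by
    rw [← Finset.card_pos, Finset.card_erase_of_mem hv]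
    omega
  exact (AffineSubspace.closed_of_finiteDimensional _).notMem_iff_infDist_pos
    ⟨w, subset_affineSpan ℝ _ hw⟩ |>.mp (hσ.notMem_affineSpan_erase hv)

lemma abs_mul_height_le_norm_sum {σ : Finset (Euc N)} {p₀ q : Euc N} (hp₀ : p₀ ∈ σ)
    (hq : q ∈ σ.erase p₀) (c : Euc N → ℝ) :
    |c q| * height σ ≤ ‖∑ r ∈ σ.erase p₀, c r • (r - p₀)‖ := by
  set A := affineSpan ℝ ((σ.erase q : Finset (Euc N)) : Set (Euc N))
  have hmemA : ∀ r ∈ σ, r ≠ q → r ∈ A := fun r hr hrq =>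
    subset_affineSpan ℝ _ (Finset.mem_erase.mpr ⟨hrq, hr⟩)
  have hp₀A : p₀ ∈ A := hmemA p₀ hp₀ (Finset.ne_of_mem_erase hq).symm
  have hrest : (∑ r ∈ σ.erase p₀, c r • (r - p₀)) - c q • (q - p₀) ∈ A.direction := by
    rw [← Finset.sum_erase_eq_sub hq]
    refine Submodule.sum_mem _ fun r hr => A.direction.smul_mem _ ?_
    obtain ⟨hrq, hr⟩ := Finset.mem_erase.mp hr
    exact AffineSubspace.vsub_mem_direction (hmemA r (Finset.mem_of_mem_erase hr) hrq) hp₀A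
  calc |c q| * height σ ≤ |c q| * infDist q A := by
        gcongr
        exact height_le_infDist σ (Finset.mem_of_mem_erase hq)
    _ ≤ _ := abs_mul_infDist_le_norm hp₀A hrest

lemma norm_starProjection_orthogonal_le_of_subset_cthickening (H : AffineSubspace ℝ (Euc N))
    {σ : Finset (Euc N)} (hσ : Nondegenerate σ) (hσne : σ.Nonempty) {t : ℝ} (ht : 0 ≤ t)
    (hσH : (σ : Set (Euc N)) ⊆ cthickening t (H : Set (Euc N))) {u : Euc N}
    (hu : u ∈ (affineSpan ℝ (σ : Set (Euc N))).direction) :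
    ‖H.directionᗮ.starProjection u‖ ≤ 2 * t * ((σ.card : ℝ) - 1) / height σ * ‖u‖ := by
  obtain ⟨p₀, hp₀⟩ := hσne
  obtain ⟨c, hc⟩ := exists_eq_sum_smul_sub_of_mem_direction hp₀ hu
  set P := H.directionᗮ.starProjection
  have hcoef : ∀ q ∈ σ.erase p₀, |c q| ≤ ‖u‖ / height σ := fun q hq => by
    have hcard : 1 < σ.card :=
      Finset.one_lt_card.mpr ⟨q, Finset.mem_of_mem_erase hq, p₀, hp₀, Finset.ne_of_mem_erase hq⟩
    rw [le_div_iff₀ (height_pos hσ hcard), hc]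
    exact abs_mul_height_le_norm_sum hp₀ hq c
  calc ‖P u‖ = ‖∑ q ∈ σ.erase p₀, c q • P (q - p₀)‖ := by simp only [hc, map_sum, map_smul]
    _ ≤ ∑ q ∈ σ.erase p₀, ‖c q • P (q - p₀)‖ := norm_sum_le _ _
    _ ≤ ∑ q ∈ σ.erase p₀, ‖u‖ / height σ * (2 * t) := Finset.sum_le_sum fun q hq => by
        rw [norm_smul, Real.norm_eq_abs]
        exact mul_le_mul (hcoef q hq) (norm_starProjection_orthogonal_sub_le H ht
          (hσH (Finset.mem_of_mem_erase hq)) (hσH hp₀)) (norm_nonneg _)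
          (div_nonneg (norm_nonneg _) (height_nonneg σ))
    _ = 2 * t * ((σ.card : ℝ) - 1) / height σ * ‖u‖ := by
        rw [Finset.sum_const, Finset.card_erase_of_mem hp₀, nsmul_eq_mul,
          Nat.cast_sub (Finset.card_pos.mpr ⟨p₀, hp₀⟩), Nat.cast_one]
        ring

theorem whitney_angle_bound_general (N : ℕ) (H : AffineSubspace ℝ (Euc N))
    (σ : Finset (Euc N)) (hσ : Nondegenerate σ) (hσne : σ.Nonempty)
    (t : ℝ) (ht : 0 ≤ t)
    (hσH : (σ : Set (Euc N)) ⊆ cthickening t (H : Set (Euc N))) :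
    Real.sin (affAngle (affineSpan ℝ (σ : Set (Euc N))) H) ≤
      2 * t * ((σ.card : ℝ) - 1) / height σ := by
  have hcard : (1 : ℝ) ≤ σ.card := by exact_mod_cast hσne.card_pos
  have hB : 0 ≤ 2 * t * ((σ.card : ℝ) - 1) / height σ :=
    div_nonneg (mul_nonneg (by positivity) (by linarith)) (height_nonneg σ)
  exact sin_subAngle_le hB fun u hu =>
    norm_starProjection_orthogonal_le_of_subset_cthickening H hσ hσne ht hσH hu

theorem whitney_angle_bound (N d : ℕ) (H : AffineSubspace ℝ (Euc N))
    (hne : (H : Set (Euc N)).Nonempty)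
    (hd : Module.finrank ℝ H.direction = d)
    (σ : Finset (Euc N)) (hσ : Nondegenerate σ) (hσne : σ.Nonempty)
    (hdim : σ.card ≤ d + 1) (t : ℝ) (ht : 0 ≤ t)
    (hσH : (σ : Set (Euc N)) ⊆ cthickening t (H : Set (Euc N))) :
    Real.sin (affAngle (affineSpan ℝ (σ : Set (Euc N))) H) ≤
      2 * t * ((σ.card : ℝ) - 1) / height σ :=
  whitney_angle_bound_general N H σ hσ hσne t ht hσH
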